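/- arXiv:1601.00389 — 2 statements merged into one kernel-verified Lean document; each statement's English description precedes it below -/
import Mathlib

section
/- If Θ ∈ 𝕊^{p+q} is positive definite with blocks Θ_y, Θ_yx, Θ_x, and D_y − L_y = Θ_y with D_y positive definite diagonal and L_y positive semidefinite, then the conditional covariance (Θ_y)⁻¹ satisfies (D_y − L_y)⁻¹ − D_y⁻¹ ⪰ 0, i.e., (D_y − L_y)⁻¹ − D_y⁻¹ is positive semidefinite, and its rank equals rank(L_y). -/
open Matrix

/-- Congruence of a positive definite matrix by an invertible matrix is positive definite. -/
lemma posdef_conj {p : ℕ} {A : Matrix (Fin p) (Fin p) ℝ} (hA : A.PosDef)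
    (B : Matrix (Fin p) (Fin p) ℝ) (hB : IsUnit B.det) : (Bᴴ * A * B).PosDef := by
  refine Matrix.PosDef.of_dotProduct_mulVec_pos (Matrix.isHermitian_conjTranspose_mul_mul B hA.1) fun x hx => ?_
  have hBx : B *ᵥ x ≠ 0 := by
    intro h
    exact hx (Matrix.mulVec_injective_iff_isUnit.2 ((Matrix.isUnit_iff_isUnit_det B).2 hB)
      (by simpa using h))
  simpa only [star_mulVec, dotProduct_mulVec, vecMul_vecMul] using hA.dotProduct_mulVec_pos hBx

/-- Key lemma: if `K ⪰ 0` and `1 - K ≻ 0`, then `(1 - K)⁻¹ - 1 ⪰ 0`. -/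
lemma key_psd {p : ℕ} (K : Matrix (Fin p) (Fin p) ℝ) (hK : K.PosSemidef)
    (h1K : (1 - K).PosDef) : ((1 - K)⁻¹ - 1).PosSemidef := by
  open scoped MatrixOrder in set R := CFC.sqrt (1 - K) with hRdef
  open scoped MatrixOrder in have hR2 : R * R = 1 - K := CFC.sqrt_mul_sqrt_self _ h1K.posSemidef.nonneg
  open scoped MatrixOrder in have hRh : R.IsHermitian := (CFC.sqrt_nonneg (1 - K)).posSemidef.1
  have hC : Commute R (1 - K) := hR2 ▸ ((Commute.refl R).mul_right (Commute.refl R))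
  have hCK : Commute R K := by
    have := (Commute.one_right R).sub_right hC
    rwa [sub_sub_cancel] at this
  set W := (1 - K)⁻¹ with hWdef
  have hdet : IsUnit (1 - K).det := h1K.det_pos.ne'.isUnit
  letI := (1 - K).invertibleOfIsUnitDet hdet
  have hWl : W * (1 - K) = 1 := Matrix.nonsing_inv_mul _ hdet
  have hWr : (1 - K) * W = 1 := Matrix.mul_nonsing_inv _ hdet
  have hWh : W.IsHermitian := h1K.isHermitian.inv
  have hkey : W - 1 = (W * R) * K * (W * R)ᴴ := by
    rw [Matrix.conjTranspose_mul, hRh.eq, hWh.eq]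
    have e1 : W * R * K * (R * W) = W * (R * K * R) * W := by
      simp only [Matrix.mul_assoc]
    have e2 : R * K * R = K * (1 - K) := by rw [hCK.eq, Matrix.mul_assoc, hR2]
    have e3 : W * (K * (1 - K)) * W = W * K := by
      simp only [Matrix.mul_assoc]
      rw [hWr, Matrix.mul_one]
    have e4 : W * K = W - 1 := by
      have hK' : K = 1 - (1 - K) := (sub_sub_cancel 1 K).symm
      rw [hK', Matrix.mul_sub, Matrix.mul_one, hWl]
    rw [e1, e2, e3, e4]
  show (W - 1).PosSemidef
  rw [hkey]
  exact hK.mul_mul_conjTranspose_same _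

/-- If `D_y` is positive definite diagonal, `L_y ⪰ 0`, and `D_y − L_y ≻ 0`, then
`(D_y − L_y)⁻¹ − D_y⁻¹` is positive semidefinite with rank equal to `rank L_y`. -/
theorem stmt4 (p : ℕ) (D L : Matrix (Fin p) (Fin p) ℝ)
    (hDdiag : D.IsDiag) (hD : D.PosDef) (hL : L.PosSemidef) (hDL : (D - L).PosDef) :
    ((D - L)⁻¹ - D⁻¹).PosSemidef ∧ ((D - L)⁻¹ - D⁻¹).rank = L.rank := by
  have hDdet : IsUnit D.det := hD.det_pos.ne'.isUnit
  have hDLdet : IsUnit (D - L).det := hDL.det_pos.ne'.isUnit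
  have hDi : (D⁻¹).PosDef := hD.inv
  open scoped MatrixOrder in set T := CFC.sqrt D⁻¹ with hTdef
  open scoped MatrixOrder in have hT2 : T * T = D⁻¹ := CFC.sqrt_mul_sqrt_self _ hDi.posSemidef.nonneg
  open scoped MatrixOrder in have hTh : T.IsHermitian := (CFC.sqrt_nonneg D⁻¹).posSemidef.1
  have hTdet : IsUnit T.det := by
    have h : T.det * T.det = D⁻¹.det := by rw [← Matrix.det_mul, hT2]
    have hDidet : IsUnit D⁻¹.det := hDi.det_pos.ne'.isUnit
    rw [← h] at hDidet
    exact isUnit_of_mul_isUnit_left hDidet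
  have hTl : T⁻¹ * T = 1 := Matrix.nonsing_inv_mul _ hTdet
  have hTr : T * T⁻¹ = 1 := Matrix.mul_nonsing_inv _ hTdet
  have hTDT : T * D * T = 1 := by
    have h1 : T * D * T * (T * T) = D⁻¹ := by
      have e1 : T * D * T * (T * T) = T * (D * (T * T)) * T := by
        simp only [Matrix.mul_assoc]
      rw [e1, hT2, Matrix.mul_nonsing_inv _ hDdet, Matrix.mul_one, hT2]
    rw [hT2] at h1
    have h2 := congrArg (· * D) h1
    simpa [Matrix.mul_assoc, Matrix.nonsing_inv_mul _ hDdet] using h2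
  set K := T * L * T with hKdef
  have hK : K.PosSemidef := by
    have := hL.mul_mul_conjTranspose_same T
    rwa [hTh.eq] at this
  have h1Keq : 1 - K = T * (D - L) * T := by
    rw [hKdef, ← hTDT, Matrix.mul_sub, Matrix.sub_mul]
  have h1K : (1 - K).PosDef := by
    have := posdef_conj hDL T hTdet
    rw [hTh.eq] at this
    rwa [h1Keq]
  have hinv : (1 - K)⁻¹ = T⁻¹ * (D - L)⁻¹ * T⁻¹ := by
    rw [h1Keq]
    simp only [Matrix.mul_inv_rev, Matrix.mul_assoc]
  have hcong : T * ((1 - K)⁻¹ - 1) * T = (D - L)⁻¹ - D⁻¹ := by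
    have h1 : T * ((1 - K)⁻¹) * T = (D - L)⁻¹ := by
      rw [hinv]
      have e : T * (T⁻¹ * (D - L)⁻¹ * T⁻¹) * T = (T * T⁻¹) * (D - L)⁻¹ * (T⁻¹ * T) := by
        simp only [Matrix.mul_assoc]
      rw [e, hTr, hTl, Matrix.one_mul, Matrix.mul_one]
    rw [Matrix.mul_sub, Matrix.sub_mul, Matrix.mul_one, h1, hT2]
  constructor
  · rw [← hcong]
    have hpsd := key_psd K hK h1K
    have := hpsd.mul_mul_conjTranspose_same T
    rwa [hTh.eq] at this
  · have heq : (D - L)⁻¹ - D⁻¹ = (D - L)⁻¹ * (L * D⁻¹) := by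
      have : (D - L)⁻¹ * (L * D⁻¹) = (D - L)⁻¹ - D⁻¹ := by
        calc (D - L)⁻¹ * (L * D⁻¹) = (D - L)⁻¹ * ((D - (D - L)) * D⁻¹) := by
              rw [sub_sub_cancel]
          _ = (D - L)⁻¹ * (D * D⁻¹) - (D - L)⁻¹ * ((D - L) * D⁻¹) := by
              rw [Matrix.sub_mul, Matrix.mul_sub]
          _ = (D - L)⁻¹ - D⁻¹ := by
              rw [Matrix.mul_nonsing_inv _ hDdet, Matrix.mul_one, ← Matrix.mul_assoc,
                Matrix.nonsing_inv_mul _ hDLdet, Matrix.one_mul]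
      exact this.symm
    rw [heq, Matrix.rank_mul_eq_right_of_isUnit_det _ _
      (by rw [Matrix.det_nonsing_inv]; exact isUnit_ringInverse.mpr hDLdet),
      Matrix.rank_mul_eq_left_of_isUnit_det _ _
      (by rw [Matrix.det_nonsing_inv]; exact isUnit_ringInverse.mpr hDdet)]
end

section
/- Let M ∈ ℝ^{p₁×p₂} have reduced singular value decomposition M = UQVᵀ with U, V having orthonormal columns and Q positive definite diagonal. Then N belongs to the subdifferential of the nuclear norm at M if and only if P_{T(M)}(N) = UVᵀ and ‖P_{T(M)⊥}(N)‖₂ ≤ 1, where T(M) is the tangent space at M to the low-rank variety and ‖·‖₂ is the spectral norm. -/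
open Matrix

open scoped Matrix.Norms.L2Operator

/-- The nuclear norm of a real matrix: trace of the positive semidefinite square root
of `MᵀM` (the sum of the singular values of `M`). -/
noncomputable def nuclearNorm {m n : ℕ} (M : Matrix (Fin m) (Fin n) ℝ) : ℝ :=
  ((Matrix.posSemidef_conjTranspose_mul_self M).1.eigenvectorUnitary.1 *
    diagonal ((RCLike.ofReal : ℝ → ℝ) ∘ (√·) ∘ (Matrix.posSemidef_conjTranspose_mul_self M).1.eigenvalues) *
    (star (Matrix.posSemidef_conjTranspose_mul_self M).1.eigenvectorUnitary :
      Matrix (Fin n) (Fin n) ℝ)).trace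

namespace StmtNine

lemma dot_self_nonneg {n : ℕ} (u : Fin n → ℝ) : 0 ≤ u ⬝ᵥ u :=
  Finset.sum_nonneg fun _ _ => mul_self_nonneg _

lemma dot_le_sqrt {n : ℕ} (u v : Fin n → ℝ) :
    u ⬝ᵥ v ≤ Real.sqrt (u ⬝ᵥ u) * Real.sqrt (v ⬝ᵥ v) := by
  have cs := Finset.sum_mul_sq_le_sq_mul_sq Finset.univ u v
  have h1 : 0 ≤ u ⬝ᵥ u := dot_self_nonneg u
  have h2 : 0 ≤ v ⬝ᵥ v := dot_self_nonneg v
  have hsq : (u ⬝ᵥ v) ^ 2 ≤ (u ⬝ᵥ u) * (v ⬝ᵥ v) := by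
    simpa [dotProduct, sq] using cs
  calc u ⬝ᵥ v ≤ Real.sqrt ((u ⬝ᵥ v) ^ 2) := by
        rw [Real.sqrt_sq_eq_abs]; exact le_abs_self _
  _ ≤ Real.sqrt ((u ⬝ᵥ u) * (v ⬝ᵥ v)) := Real.sqrt_le_sqrt hsq
  _ = Real.sqrt (u ⬝ᵥ u) * Real.sqrt (v ⬝ᵥ v) := Real.sqrt_mul h1 _

lemma col_entry {a b c : ℕ} (A : Matrix (Fin a) (Fin b) ℝ) (B : Matrix (Fin a) (Fin c) ℝ)
    (i : Fin b) (j : Fin c) :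
    (Aᵀ * B) i j = (fun k => A k i) ⬝ᵥ (fun k => B k j) := by
  simp [mul_apply, dotProduct, transpose_apply]

lemma mul_col {a b c : ℕ} (A : Matrix (Fin a) (Fin b) ℝ) (B : Matrix (Fin b) (Fin c) ℝ)
    (i : Fin c) : (fun k => (A * B) k i) = A *ᵥ (fun k => B k i) := by
  ext k; simp [mul_apply, mulVec, dotProduct]

lemma mulVec_dot {a b : ℕ} (A : Matrix (Fin a) (Fin b) ℝ) (x : Fin b → ℝ) (y : Fin a → ℝ) :
    (A *ᵥ x) ⬝ᵥ y = x ⬝ᵥ (Aᵀ *ᵥ y) := by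
  simp only [dotProduct, mulVec, transpose_apply, Finset.sum_mul, Finset.mul_sum, dotProduct]
  rw [Finset.sum_comm]
  apply Finset.sum_congr rfl; intros
  apply Finset.sum_congr rfl; intros
  ring

lemma norm_le_one_iff_dot {m n : ℕ} (A : Matrix (Fin m) (Fin n) ℝ) :
    ‖A‖ ≤ 1 ↔ ∀ x : Fin n → ℝ, (A *ᵥ x) ⬝ᵥ (A *ᵥ x) ≤ x ⬝ᵥ x := by
  have enorm_sq_eq_dot : ∀ {k : ℕ} (y : Fin k → ℝ),
      ‖(WithLp.equiv 2 (Fin k → ℝ)).symm y‖ ^ 2 = y ⬝ᵥ y := by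
    intro k y
    rw [EuclideanSpace.norm_eq, Real.sq_sqrt (by positivity)]
    simp [dotProduct, sq, Real.norm_eq_abs, abs_mul_self]
  constructor
  · intro h x
    have h1 := Matrix.l2_opNorm_mulVec A ((WithLp.equiv 2 (Fin n → ℝ)).symm x)
    have h1' : ‖(WithLp.equiv 2 (Fin m → ℝ)).symm (A *ᵥ x)‖ ≤
        ‖A‖ * ‖(WithLp.equiv 2 (Fin n → ℝ)).symm x‖ := h1
    have k1 := enorm_sq_eq_dot (A *ᵥ x)
    have k2 := enorm_sq_eq_dot x
    have hn1 : (0:ℝ) ≤ ‖(WithLp.equiv 2 (Fin n → ℝ)).symm x‖ := norm_nonneg _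
    have hn2 : (0:ℝ) ≤ ‖(WithLp.equiv 2 (Fin m → ℝ)).symm (A *ᵥ x)‖ := norm_nonneg _
    have h3 : ‖(WithLp.equiv 2 (Fin m → ℝ)).symm (A *ᵥ x)‖ ≤
        ‖(WithLp.equiv 2 (Fin n → ℝ)).symm x‖ :=
      h1'.trans (by nlinarith)
    nlinarith
  · intro h
    rw [Matrix.l2_opNorm_def]
    refine ContinuousLinearMap.opNorm_le_bound _ zero_le_one fun x => ?_
    rw [one_mul]
    set y := (WithLp.equiv 2 (Fin n → ℝ)) x with hy
    have hx : ‖(LinearEquiv.trans toEuclideanLin LinearMap.toContinuousLinearMap) A x‖ =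
        ‖(WithLp.equiv 2 (Fin m → ℝ)).symm (A *ᵥ y)‖ := rfl
    have hxx : ‖x‖ = ‖(WithLp.equiv 2 (Fin n → ℝ)).symm y‖ := rfl
    have h2 := h y
    have k1 := enorm_sq_eq_dot (A *ᵥ y)
    have k2 := enorm_sq_eq_dot y
    rw [hx, hxx]
    have hn1 : (0:ℝ) ≤ ‖(WithLp.equiv 2 (Fin n → ℝ)).symm y‖ := norm_nonneg _
    have hn2 : (0:ℝ) ≤ ‖(WithLp.equiv 2 (Fin m → ℝ)).symm (A *ᵥ y)‖ := norm_nonneg _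
    nlinarith

lemma proj_dot {n : ℕ} (P : Matrix (Fin n) (Fin n) ℝ) (hsym : Pᵀ = P) (hidem : P * P = P)
    (x : Fin n → ℝ) : (P *ᵥ x) ⬝ᵥ (P *ᵥ x) ≤ x ⬝ᵥ x := by
  have h1 : (P *ᵥ x) ⬝ᵥ (P *ᵥ x) = x ⬝ᵥ (P *ᵥ x) := by
    rw [mulVec_dot, hsym, Matrix.mulVec_mulVec, hidem]
  have cs := dot_le_sqrt x (P *ᵥ x)
  have h0 : 0 ≤ (P *ᵥ x) ⬝ᵥ (P *ᵥ x) := dot_self_nonneg _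
  have hx0 : 0 ≤ x ⬝ᵥ x := dot_self_nonneg x
  have e1 : Real.sqrt ((P *ᵥ x) ⬝ᵥ (P *ᵥ x)) ^ 2 = (P *ᵥ x) ⬝ᵥ (P *ᵥ x) := Real.sq_sqrt h0
  have e2 : Real.sqrt (x ⬝ᵥ x) ^ 2 = x ⬝ᵥ x := Real.sq_sqrt hx0
  nlinarith [Real.sqrt_nonneg ((P *ᵥ x) ⬝ᵥ (P *ᵥ x)), Real.sqrt_nonneg (x ⬝ᵥ x)]

open scoped MatrixOrder in
lemma nuclearNorm_eq_of_sq {m n : ℕ} (M : Matrix (Fin m) (Fin n) ℝ)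
    (B : Matrix (Fin n) (Fin n) ℝ) (hB : B.PosSemidef) (hsq : B ^ 2 = Mᴴ * M) :
    nuclearNorm M = B.trace := by
  have hA := Matrix.posSemidef_conjTranspose_mul_self M
  have h1 : CFC.sqrt (Mᴴ * M) = B :=
    CFC.sqrt_unique (by rw [← sq, hsq]) hB.nonneg
  have h2 : CFC.sqrt (Mᴴ * M) = hA.1.cfc Real.sqrt := by
    rw [CFC.sqrt_eq_cfc, cfc_nnreal_eq_real _ _ hA.nonneg, hA.1.cfc_eq]
    congr 1
    funext x
    rw [Real.coe_sqrt, Real.coe_toNNReal']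
    by_cases hx : 0 ≤ x
    · rw [max_eq_left hx]
    · rw [max_eq_right (le_of_not_ge hx), Real.sqrt_zero,
        Real.sqrt_eq_zero'.mpr (le_of_not_ge hx)]
  rw [← h1, h2, IsHermitian.cfc, Unitary.conjStarAlgAut_apply]
  rfl

lemma nuclearNorm_svd {p₁ p₂ r : ℕ}
    (U : Matrix (Fin p₁) (Fin r) ℝ) (Q : Matrix (Fin r) (Fin r) ℝ)
    (V : Matrix (Fin p₂) (Fin r) ℝ)
    (hU : Uᵀ * U = 1) (hV : Vᵀ * V = 1)
    (hQsym : Qᵀ = Q) (hQpsd : Q.PosSemidef) :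
    nuclearNorm (U * Q * Vᵀ) = Q.trace := by
  have hct : ∀ {a b : ℕ} (A : Matrix (Fin a) (Fin b) ℝ), Aᴴ = Aᵀ := fun A => rfl
  have hpsd : (V * Q * Vᵀ).PosSemidef := by
    have := hQpsd.mul_mul_conjTranspose_same V
    rwa [hct] at this
  have hsq : (V * Q * Vᵀ) ^ 2 = (U * Q * Vᵀ)ᴴ * (U * Q * Vᵀ) := by
    rw [hct, pow_two]
    simp only [transpose_mul, transpose_transpose, Matrix.mul_assoc]
    rw [hQsym, ← Matrix.mul_assoc Vᵀ V, hV, ← Matrix.mul_assoc Uᵀ U, hU, Matrix.one_mul]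
  have := nuclearNorm_eq_of_sq _ _ hpsd hsq
  rw [this, trace_mul_cycle, hV, Matrix.one_mul]

lemma nuclearNorm_zero {m n : ℕ} : nuclearNorm (0 : Matrix (Fin m) (Fin n) ℝ) = 0 := by
  have h0 : (0 : Matrix (Fin n) (Fin n) ℝ).PosSemidef := Matrix.PosSemidef.zero
  have hsq : (0 : Matrix (Fin n) (Fin n) ℝ) ^ 2 =
      (0 : Matrix (Fin m) (Fin n) ℝ)ᴴ * (0 : Matrix (Fin m) (Fin n) ℝ) := by
    simp [pow_two]
  have := nuclearNorm_eq_of_sq _ _ h0 hsq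
  rw [this, Matrix.trace_zero]

lemma trace_sqrt_eq {n : ℕ} {A : Matrix (Fin n) (Fin n) ℝ} (hA : A.PosSemidef) :
    ((hA.1.eigenvectorUnitary : Matrix (Fin n) (Fin n) ℝ) *
      diagonal ((RCLike.ofReal : ℝ → ℝ) ∘ (√·) ∘ hA.1.eigenvalues) *
      (star hA.1.eigenvectorUnitary : Matrix (Fin n) (Fin n) ℝ)).trace = ∑ i, Real.sqrt (hA.1.eigenvalues i) := by
  have h1 : star (hA.1.eigenvectorUnitary : Matrix (Fin n) (Fin n) ℝ) *
      (hA.1.eigenvectorUnitary : Matrix (Fin n) (Fin n) ℝ) = 1 :=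
    Matrix.mem_unitaryGroup_iff'.mp hA.1.eigenvectorUnitary.2
  rw [trace_mul_cycle, h1, Matrix.one_mul, trace_diagonal]
  simp

lemma trace_le_nuclearNorm {p₁ p₂ : ℕ} (N X : Matrix (Fin p₁) (Fin p₂) ℝ)
    (hN : ∀ x : Fin p₂ → ℝ, (N *ᵥ x) ⬝ᵥ (N *ᵥ x) ≤ x ⬝ᵥ x) :
    (Nᵀ * X).trace ≤ nuclearNorm X := by
  set hH := Matrix.posSemidef_conjTranspose_mul_self X with hHdef
  set hHerm := hH.1 with hHermdef
  set W : Matrix (Fin p₂) (Fin p₂) ℝ := (hHerm.eigenvectorUnitary : Matrix (Fin p₂) (Fin p₂) ℝ)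
    with hWdef
  have hWW : W * star W = 1 := (Matrix.mem_unitaryGroup_iff).mp hHerm.eigenvectorUnitary.2
  have hWW' : star W * W = 1 := (Matrix.mem_unitaryGroup_iff').mp hHerm.eigenvectorUnitary.2
  have hstar : star W = Wᵀ := rfl
  have hnn : nuclearNorm X = ∑ i, Real.sqrt (hHerm.eigenvalues i) := trace_sqrt_eq hH
  have hdiag : star W * (Xᴴ * X) * W = diagonal (RCLike.ofReal ∘ hHerm.eigenvalues) :=
    by
      have := Matrix.IsHermitian.conjStarAlgAut_star_eigenvectorUnitary hHerm
      rwa [Unitary.conjStarAlgAut_star_apply] at this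
  have htr : (star W * (Nᵀ * X) * W).trace = (Nᵀ * X).trace := by
    rw [← trace_mul_cycle (Nᵀ * X) W (star W), Matrix.mul_assoc, hWW, Matrix.mul_one]
  rw [← htr, hnn, Matrix.trace]
  apply Finset.sum_le_sum
  intro i _
  set w : Fin p₂ → ℝ := fun k => W k i with hw
  have hentry : (star W * (Nᵀ * X) * W).diag i = (N *ᵥ w) ⬝ᵥ (X *ᵥ w) := by
    have e1 : star W * (Nᵀ * X) * W = (N * W)ᵀ * (X * W) := by
      rw [hstar, transpose_mul]
      simp only [Matrix.mul_assoc]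
    rw [Matrix.diag, e1, col_entry, mul_col, mul_col]
  have hXw : (X *ᵥ w) ⬝ᵥ (X *ᵥ w) = hHerm.eigenvalues i := by
    have e1 : star W * (Xᴴ * X) * W = (X * W)ᵀ * (X * W) := by
      rw [hstar, transpose_mul]
      show Wᵀ * (Xᵀ * X) * W = _
      simp only [Matrix.mul_assoc]
    have h2 := congrArg (fun A => A i i) (e1.symm.trans hdiag)
    simp only [diagonal_apply_eq, Function.comp_apply, RCLike.ofReal_real_eq_id, id_eq] at h2
    rw [← h2, col_entry, mul_col]
  have hww : w ⬝ᵥ w = 1 := by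
    have h2 := congrArg (fun A => A i i) hWW'
    rw [hstar] at h2
    simp only [Matrix.one_apply_eq] at h2
    rw [← h2, col_entry]
  have hNw : (N *ᵥ w) ⬝ᵥ (N *ᵥ w) ≤ 1 := (hN w).trans_eq hww
  calc (star W * (Nᵀ * X) * W).diag i = (N *ᵥ w) ⬝ᵥ (X *ᵥ w) := hentry
  _ ≤ Real.sqrt ((N *ᵥ w) ⬝ᵥ (N *ᵥ w)) * Real.sqrt ((X *ᵥ w) ⬝ᵥ (X *ᵥ w)) := dot_le_sqrt _ _
  _ ≤ 1 * Real.sqrt (hHerm.eigenvalues i) := by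
      rw [hXw]
      refine mul_le_mul_of_nonneg_right ?_ (Real.sqrt_nonneg _)
      rw [show (1:ℝ) = Real.sqrt 1 by simp]
      exact Real.sqrt_le_sqrt hNw
  _ = Real.sqrt (hHerm.eigenvalues i) := one_mul _

lemma nuclearNorm_rank_one {p₁ p₂ : ℕ} (y : Fin p₁ → ℝ) (x : Fin p₂ → ℝ) (hx : x ⬝ᵥ x = 1) :
    nuclearNorm (vecMulVec y x) = Real.sqrt (y ⬝ᵥ y) := by
  set s := Real.sqrt (y ⬝ᵥ y) with hs
  have hs0 : 0 ≤ s := Real.sqrt_nonneg _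
  have hss : s * s = y ⬝ᵥ y := Real.mul_self_sqrt (dot_self_nonneg y)
  set C : Matrix (Fin p₂) (Fin p₂) ℝ := Matrix.of fun i j => s * (x i * x j) with hC
  have hpsd : C.PosSemidef := by
    refine Matrix.PosSemidef.of_dotProduct_mulVec_nonneg ?_ ?_
    · ext i j
      simp only [conjTranspose_apply, hC, Matrix.of_apply, star_trivial]
      ring
    · intro z
      have hz : star z = z := by simp
      have key : dotProduct (star z) (C *ᵥ z) = s * ((x ⬝ᵥ z) * (x ⬝ᵥ z)) := by
        rw [hz]
        calc z ⬝ᵥ (C *ᵥ z) = ∑ i, ∑ j, (s * ((x i * z i) * (x j * z j))) := by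
              simp only [hC, dotProduct, mulVec, Matrix.of_apply, dotProduct, Finset.mul_sum]
              exact Finset.sum_congr rfl fun i _ =>
                Finset.sum_congr rfl fun j _ => by ring
        _ = s * ((x ⬝ᵥ z) * (x ⬝ᵥ z)) := by
              rw [dotProduct, Finset.sum_mul_sum, Finset.mul_sum]
              refine Finset.sum_congr rfl fun i _ => ?_
              rw [Finset.mul_sum]
      rw [key]
      exact mul_nonneg hs0 (mul_self_nonneg _)
  have hsq : C ^ 2 = (vecMulVec y x)ᴴ * (vecMulVec y x) := by
    rw [pow_two]
    ext i j
    simp only [mul_apply, hC, Matrix.of_apply, conjTranspose_apply, vecMulVec_apply, star_trivial]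
    have l : ∀ k, s * (x i * x k) * (s * (x k * x j)) = (s * s * (x i * x j)) * (x k * x k) :=
      fun k => by ring
    have r : ∀ k, (y k * x i) * (y k * x j) = (x i * x j) * (y k * y k) := fun k => by ring
    simp only [l, r, ← Finset.mul_sum]
    have h1 : ∑ k, x k * x k = 1 := hx
    have h2 : ∑ k, y k * y k = y ⬝ᵥ y := rfl
    rw [h1, h2, mul_one, hss]
    ring
  have := nuclearNorm_eq_of_sq _ _ hpsd hsq
  rw [this, Matrix.trace]
  have ht : ∑ i, C.diag i = s * (x ⬝ᵥ x) := by
    simp only [Matrix.diag, hC, Matrix.of_apply, dotProduct, Finset.mul_sum]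
  rw [ht, hx, mul_one]

lemma trace_mul_vecMulVec {p₁ p₂ : ℕ} (N : Matrix (Fin p₁) (Fin p₂) ℝ)
    (y : Fin p₁ → ℝ) (u : Fin p₂ → ℝ) :
    (Nᵀ * vecMulVec y u).trace = y ⬝ᵥ (N *ᵥ u) := by
  simp only [Matrix.trace, Matrix.diag, mul_apply, transpose_apply, vecMulVec_apply,
    dotProduct, mulVec, dotProduct, Finset.mul_sum]
  rw [Finset.sum_comm]
  apply Finset.sum_congr rfl; intros
  apply Finset.sum_congr rfl; intros
  ring

lemma trace_mul_diag {r : ℕ} (G Q : Matrix (Fin r) (Fin r) ℝ) (hQ : Q.IsDiag) :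
    (G * Q).trace = ∑ i, G i i * Q i i := by
  simp only [Matrix.trace, Matrix.diag, mul_apply]
  refine Finset.sum_congr rfl fun i _ => ?_
  rw [Finset.sum_eq_single i]
  · intro j _ hji
    rw [hQ hji, mul_zero]
  · intro hi
    exact absurd (Finset.mem_univ i) hi

end StmtNine

open StmtNine in
/-- Subdifferential of the nuclear norm: for `M = U Q Vᵀ` a reduced SVD, `N` is a
subgradient of the nuclear norm at `M` iff `P_{T(M)}(N) = UVᵀ` and
`‖P_{T(M)⊥}(N)‖₂ ≤ 1`, where `T(M)` is the tangent space at `M` to the low-rank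
variety, with `P_T(N) = UUᵀN + NVVᵀ − UUᵀNVVᵀ` and `P_{T⊥}(N) = (1−UUᵀ)N(1−VVᵀ)`. -/
theorem stmt9 (p₁ p₂ r : ℕ) (M : Matrix (Fin p₁) (Fin p₂) ℝ)
    (U : Matrix (Fin p₁) (Fin r) ℝ) (Q : Matrix (Fin r) (Fin r) ℝ)
    (V : Matrix (Fin p₂) (Fin r) ℝ)
    (hSVD : M = U * Q * Vᵀ) (hU : Uᵀ * U = 1) (hV : Vᵀ * V = 1)
    (hQdiag : Q.IsDiag) (hQpd : Q.PosDef)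
    (N : Matrix (Fin p₁) (Fin p₂) ℝ) :
    (∀ X : Matrix (Fin p₁) (Fin p₂) ℝ,
        nuclearNorm M + (Nᵀ * (X - M)).trace ≤ nuclearNorm X) ↔
      (U * Uᵀ * N + N * (V * Vᵀ) - U * Uᵀ * N * (V * Vᵀ) = U * Vᵀ ∧
        ‖(1 - U * Uᵀ) * N * (1 - V * Vᵀ)‖ ≤ 1) := by
  have hQsym : Qᵀ = Q := hQdiag.isSymm
  have hnnM : nuclearNorm M = Q.trace := by
    rw [hSVD]; exact nuclearNorm_svd U Q V hU hV hQsym hQpd.posSemidef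
  have hQpos : ∀ i, 0 < Q i i := fun i => by
    have hne : (Pi.single i 1 : Fin r → ℝ) ≠ 0 := by
      intro hh
      have h1 := congrFun hh i
      simp at h1
    have h := hQpd.dotProduct_mulVec_pos hne
    have e : dotProduct (star (Pi.single i 1 : Fin r → ℝ)) (Q *ᵥ Pi.single i 1) = Q i i := by
      have hst : star (Pi.single i 1 : Fin r → ℝ) = Pi.single i 1 := by
        ext k; simp [Pi.single_apply]
      rw [hst, dotProduct]
      rw [Finset.sum_eq_single i]
      · simp [mulVec, dotProduct, Pi.single_apply]
      · intro j _ hji; simp [Pi.single_apply, hji]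
      · intro hi; exact absurd (Finset.mem_univ i) hi
    rwa [e] at h
  -- projector facts
  have hUUTidem : U * Uᵀ * (U * Uᵀ) = U * Uᵀ := by
    rw [Matrix.mul_assoc, ← Matrix.mul_assoc Uᵀ U, hU, Matrix.one_mul]
  have hVVTidem : V * Vᵀ * (V * Vᵀ) = V * Vᵀ := by
    rw [Matrix.mul_assoc, ← Matrix.mul_assoc Vᵀ V, hV, Matrix.one_mul]
  have hPsym : (1 - U * Uᵀ)ᵀ = 1 - U * Uᵀ := by
    rw [transpose_sub, transpose_one, transpose_mul, transpose_transpose]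
  have hRsym : (1 - V * Vᵀ)ᵀ = 1 - V * Vᵀ := by
    rw [transpose_sub, transpose_one, transpose_mul, transpose_transpose]
  have hPidem : (1 - U * Uᵀ) * (1 - U * Uᵀ) = 1 - U * Uᵀ := by
    simp only [Matrix.mul_sub, Matrix.sub_mul, Matrix.one_mul, Matrix.mul_one, hUUTidem]
    abel
  have hRidem : (1 - V * Vᵀ) * (1 - V * Vᵀ) = 1 - V * Vᵀ := by
    simp only [Matrix.mul_sub, Matrix.sub_mul, Matrix.one_mul, Matrix.mul_one, hVVTidem]
    abel
  constructor
  · -- forward direction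
    intro h
    -- trace identity
    have h0 := h 0
    rw [nuclearNorm_zero, zero_sub, Matrix.mul_neg, trace_neg, hnnM] at h0
    have h2 := h (M + M)
    have hMM : M + M = U * (Q + Q) * Vᵀ := by
      rw [hSVD, Matrix.mul_add, Matrix.add_mul]
    have hnn2 : nuclearNorm (M + M) = Q.trace + Q.trace := by
      rw [hMM, nuclearNorm_svd U (Q + Q) V hU hV (by rw [transpose_add, hQsym])
        (hQpd.posSemidef.add hQpd.posSemidef), trace_add]
    rw [hnn2, add_sub_cancel_left, hnnM] at h2
    have htrNM : (Nᵀ * M).trace = Q.trace := le_antisymm (by linarith) (by linarith)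
    have hdual : ∀ X : Matrix (Fin p₁) (Fin p₂) ℝ, (Nᵀ * X).trace ≤ nuclearNorm X := by
      intro X
      have := h X
      rw [Matrix.mul_sub, trace_sub, hnnM, htrNM] at this
      linarith
    -- ‖N x‖ ≤ ‖x‖ for all x
    have hball : ∀ x : Fin p₂ → ℝ, (N *ᵥ x) ⬝ᵥ (N *ᵥ x) ≤ x ⬝ᵥ x := by
      intro x
      by_cases hx : x ⬝ᵥ x = 0
      · have hx0 : x = 0 := dotProduct_self_eq_zero.mp hx
        subst hx0
        simp
      · have hxpos : 0 < x ⬝ᵥ x := (dot_self_nonneg x).lt_of_ne (Ne.symm hx)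
        set c := Real.sqrt (x ⬝ᵥ x) with hc
        have hcpos : 0 < c := Real.sqrt_pos.mpr hxpos
        have hcc : c * c = x ⬝ᵥ x := Real.mul_self_sqrt hxpos.le
        set u : Fin p₂ → ℝ := c⁻¹ • x with hu
        have huu : u ⬝ᵥ u = 1 := by
          rw [hu, smul_dotProduct, dotProduct_smul, smul_eq_mul, smul_eq_mul, ← hcc]
          field_simp
        have hNu : N *ᵥ u = c⁻¹ • (N *ᵥ x) := by rw [hu, Matrix.mulVec_smul]
        -- unit-vector bound
        have hub : (N *ᵥ u) ⬝ᵥ (N *ᵥ u) ≤ 1 := by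
          have hd := hdual (vecMulVec (N *ᵥ u) u)
          rw [nuclearNorm_rank_one _ u huu, trace_mul_vecMulVec] at hd
          set t := (N *ᵥ u) ⬝ᵥ (N *ᵥ u) with ht
          have ht0 : 0 ≤ t := dot_self_nonneg _
          have he : Real.sqrt t ^ 2 = t := Real.sq_sqrt ht0
          nlinarith [Real.sqrt_nonneg t]
        rw [hNu, smul_dotProduct, dotProduct_smul, smul_eq_mul, smul_eq_mul] at hub
        have hinv : 0 < c⁻¹ := inv_pos.mpr hcpos
        calc (N *ᵥ x) ⬝ᵥ (N *ᵥ x) = (c * c) * (c⁻¹ * (c⁻¹ * ((N *ᵥ x) ⬝ᵥ (N *ᵥ x)))) := by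
              field_simp
        _ ≤ (c * c) * 1 := by
              exact mul_le_mul_of_nonneg_left hub (by positivity)
        _ = x ⬝ᵥ x := by rw [mul_one, hcc]
    have hN1 : ‖N‖ ≤ 1 := (norm_le_one_iff_dot N).mpr hball
    have hNT1 : ‖Nᵀ‖ ≤ 1 := by
      have : (Nᵀ : Matrix (Fin p₂) (Fin p₁) ℝ) = Nᴴ := rfl
      rw [this, Matrix.l2_opNorm_conjTranspose]
      exact hN1
    have hballT : ∀ x : Fin p₁ → ℝ, (Nᵀ *ᵥ x) ⬝ᵥ (Nᵀ *ᵥ x) ≤ x ⬝ᵥ x :=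
      (norm_le_one_iff_dot Nᵀ).mp hNT1
    -- column diagonal entries
    set A : Fin r → ℝ := fun i => (fun k => U k i) ⬝ᵥ (N *ᵥ fun k => V k i) with hA
    have hui : ∀ i, (fun k => U k i) ⬝ᵥ (fun k => U k i) = 1 := fun i => by
      have := congrArg (fun B => B i i) hU
      simp only [Matrix.one_apply_eq] at this
      rw [← this, col_entry]
    have hvi : ∀ i, (fun k => V k i) ⬝ᵥ (fun k => V k i) = 1 := fun i => by
      have := congrArg (fun B => B i i) hV
      simp only [Matrix.one_apply_eq] at this
      rw [← this, col_entry]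
    have htrsum : (Nᵀ * M).trace = ∑ i, (Vᵀ * (Nᵀ * U)) i i * Q i i := by
      rw [hSVD]
      have e1 : Nᵀ * (U * Q * Vᵀ) = (Nᵀ * U * Q) * Vᵀ := by
        simp only [Matrix.mul_assoc]
      rw [e1, trace_mul_comm,
        show Vᵀ * (Nᵀ * U * Q) = (Vᵀ * (Nᵀ * U)) * Q by simp only [Matrix.mul_assoc],
        trace_mul_diag _ Q hQdiag]
    have hGA : ∀ i, (Vᵀ * (Nᵀ * U)) i i = A i := by
      intro i
      rw [col_entry, mul_col, hA, ← mulVec_dot, dotProduct_comm]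
    have hAle : ∀ i, A i ≤ 1 := by
      intro i
      have cs := dot_le_sqrt (fun k => U k i) (N *ᵥ fun k => V k i)
      have h1 : (N *ᵥ fun k => V k i) ⬝ᵥ (N *ᵥ fun k => V k i) ≤ 1 :=
        (hball _).trans_eq (hvi i)
      have h2 : Real.sqrt ((fun k => U k i) ⬝ᵥ (fun k => U k i)) = 1 := by
        rw [hui i, Real.sqrt_one]
      have h3 : Real.sqrt ((N *ᵥ fun k => V k i) ⬝ᵥ (N *ᵥ fun k => V k i)) ≤ 1 := by
        rw [show (1:ℝ) = Real.sqrt 1 by simp]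
        exact Real.sqrt_le_sqrt h1
      rw [hA]
      calc (fun k => U k i) ⬝ᵥ (N *ᵥ fun k => V k i) ≤ _ := cs
      _ ≤ 1 := by rw [h2, one_mul]; exact h3
    have hsum0 : ∑ i, Q i i * (1 - A i) = 0 := by
      have e1 : ∑ i, Q i i * (1 - A i) = Q.trace - (Nᵀ * M).trace := by
        rw [htrsum, Matrix.trace]
        rw [← Finset.sum_sub_distrib]
        refine Finset.sum_congr rfl fun i _ => ?_
        rw [hGA i, Matrix.diag]
        ring
      rw [e1, htrNM, sub_self]
    have hA1 : ∀ i, A i = 1 := by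
      intro i
      have := (Finset.sum_eq_zero_iff_of_nonneg (fun j _ =>
        mul_nonneg (hQpos j).le (by linarith [hAle j]))).mp hsum0 i (Finset.mem_univ i)
      have hq := hQpos i
      have : 1 - A i = 0 := by
        rcases mul_eq_zero.mp this with hh | hh
        · exact absurd hh hq.ne'
        · exact hh
      linarith
    -- N *ᵥ vᵢ = uᵢ and Nᵀ *ᵥ uᵢ = vᵢ
    have hNv : ∀ i, (N *ᵥ fun k => V k i) = fun k => U k i := by
      intro i
      have hd : ((N *ᵥ fun k => V k i) - fun k => U k i) ⬝ᵥ
          ((N *ᵥ fun k => V k i) - fun k => U k i) ≤ 0 := by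
        rw [sub_dotProduct, dotProduct_sub, dotProduct_sub]
        have h1 : (N *ᵥ fun k => V k i) ⬝ᵥ (N *ᵥ fun k => V k i) ≤ 1 :=
          (hball _).trans_eq (hvi i)
        have h2 : (fun k => U k i) ⬝ᵥ (N *ᵥ fun k => V k i) = 1 := hA1 i
        have h2' : (N *ᵥ fun k => V k i) ⬝ᵥ (fun k => U k i) = 1 := by
          rw [dotProduct_comm]; exact h2
        have h3 := hui i
        linarith
      have := le_antisymm hd (dot_self_nonneg _)
      have := dotProduct_self_eq_zero.mp this
      exact sub_eq_zero.mp this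
    have hNTu : ∀ i, (Nᵀ *ᵥ fun k => U k i) = fun k => V k i := by
      intro i
      have hAalt : (Nᵀ *ᵥ fun k => U k i) ⬝ᵥ (fun k => V k i) = A i := by
        have hmd := mulVec_dot Nᵀ (fun k => U k i) (fun k => V k i)
        rw [transpose_transpose] at hmd
        rw [hmd]
      have hd : ((Nᵀ *ᵥ fun k => U k i) - fun k => V k i) ⬝ᵥ
          ((Nᵀ *ᵥ fun k => U k i) - fun k => V k i) ≤ 0 := by
        rw [sub_dotProduct, dotProduct_sub, dotProduct_sub]
        have h1 : (Nᵀ *ᵥ fun k => U k i) ⬝ᵥ (Nᵀ *ᵥ fun k => U k i) ≤ 1 :=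
          (hballT _).trans_eq (hui i)
        have h2 : (Nᵀ *ᵥ fun k => U k i) ⬝ᵥ (fun k => V k i) = 1 := hAalt.trans (hA1 i)
        have h2' : (fun k => V k i) ⬝ᵥ (Nᵀ *ᵥ fun k => U k i) = 1 := by
          rw [dotProduct_comm]; exact h2
        have h3 := hvi i
        linarith
      have := le_antisymm hd (dot_self_nonneg _)
      have := dotProduct_self_eq_zero.mp this
      exact sub_eq_zero.mp this
    have hNV : N * V = U := by
      ext k i
      have := congrFun (mul_col N V i) k
      rw [this, hNv i]
    have hNTU : Nᵀ * U = V := by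
      ext k i
      have := congrFun (mul_col Nᵀ U i) k
      rw [this, hNTu i]
    have hUTN : Uᵀ * N = Vᵀ := by
      have := congrArg Matrix.transpose hNTU
      rwa [transpose_mul, transpose_transpose] at this
    constructor
    · -- tangent space part
      have e1 : U * Uᵀ * N = U * Vᵀ := by rw [Matrix.mul_assoc, hUTN]
      have e2 : N * (V * Vᵀ) = U * Vᵀ := by rw [← Matrix.mul_assoc, hNV]
      have e3 : U * Uᵀ * N * (V * Vᵀ) = U * Vᵀ := by
        rw [e1, Matrix.mul_assoc, ← Matrix.mul_assoc Vᵀ V, hV, Matrix.one_mul]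
      rw [e3, e2, e1]
      abel
    · -- spectral norm part
      rw [norm_le_one_iff_dot]
      intro x
      have hmv : ((1 - U * Uᵀ) * N * (1 - V * Vᵀ)) *ᵥ x =
          (1 - U * Uᵀ) *ᵥ (N *ᵥ ((1 - V * Vᵀ) *ᵥ x)) := by
        rw [Matrix.mulVec_mulVec, Matrix.mulVec_mulVec]
      rw [hmv]
      calc ((1 - U * Uᵀ) *ᵥ (N *ᵥ ((1 - V * Vᵀ) *ᵥ x))) ⬝ᵥ _ ≤
          (N *ᵥ ((1 - V * Vᵀ) *ᵥ x)) ⬝ᵥ (N *ᵥ ((1 - V * Vᵀ) *ᵥ x)) :=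
            proj_dot _ hPsym hPidem _
      _ ≤ ((1 - V * Vᵀ) *ᵥ x) ⬝ᵥ ((1 - V * Vᵀ) *ᵥ x) := hball _
      _ ≤ x ⬝ᵥ x := proj_dot _ hRsym hRidem x
  · -- backward direction
    rintro ⟨hPT, hWn⟩ X
    set W : Matrix (Fin p₁) (Fin p₂) ℝ := (1 - U * Uᵀ) * N * (1 - V * Vᵀ) with hWdef
    have hWeq : W = N - U * Vᵀ := by
      rw [hWdef]
      calc (1 - U * Uᵀ) * N * (1 - V * Vᵀ)
          = (N - U * Uᵀ * N) * (1 - V * Vᵀ) := by rw [Matrix.sub_mul, Matrix.one_mul]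
      _ = N - U * Uᵀ * N - (N * (V * Vᵀ) - U * Uᵀ * N * (V * Vᵀ)) := by
          rw [Matrix.mul_sub, Matrix.mul_one, Matrix.sub_mul]
      _ = N - (U * Uᵀ * N + N * (V * Vᵀ) - U * Uᵀ * N * (V * Vᵀ)) := by abel
      _ = N - U * Vᵀ := by rw [hPT]
    have hNdec : N = U * Vᵀ + W := by rw [hWeq]; abel
    have hUTW : Uᵀ * W = 0 := by
      have e1 : Uᵀ * (1 - U * Uᵀ) = 0 := by
        rw [Matrix.mul_sub, Matrix.mul_one, ← Matrix.mul_assoc, hU, Matrix.one_mul, sub_self]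
      rw [hWdef, ← Matrix.mul_assoc, ← Matrix.mul_assoc, e1, Matrix.zero_mul, Matrix.zero_mul]
    have hWV : W * V = 0 := by
      have e1 : (1 - V * Vᵀ) * V = 0 := by
        rw [Matrix.sub_mul, Matrix.one_mul, Matrix.mul_assoc, hV, Matrix.mul_one, sub_self]
      rw [hWdef, Matrix.mul_assoc, e1, Matrix.mul_zero]
    have hWball : ∀ z : Fin p₂ → ℝ, (W *ᵥ z) ⬝ᵥ (W *ᵥ z) ≤ z ⬝ᵥ z :=
      (norm_le_one_iff_dot W).mp hWn
    -- ball bound for N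
    have hball : ∀ x : Fin p₂ → ℝ, (N *ᵥ x) ⬝ᵥ (N *ᵥ x) ≤ x ⬝ᵥ x := by
      intro x
      have hNx : N *ᵥ x = U *ᵥ (Vᵀ *ᵥ x) + W *ᵥ x := by
        rw [hNdec, Matrix.add_mulVec, Matrix.mulVec_mulVec]
      have hcross : (U *ᵥ (Vᵀ *ᵥ x)) ⬝ᵥ (W *ᵥ x) = 0 := by
        rw [mulVec_dot, Matrix.mulVec_mulVec, hUTW, Matrix.zero_mulVec, dotProduct_zero]
      have hterm1 : (U *ᵥ (Vᵀ *ᵥ x)) ⬝ᵥ (U *ᵥ (Vᵀ *ᵥ x)) = (Vᵀ *ᵥ x) ⬝ᵥ (Vᵀ *ᵥ x) := by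
        rw [mulVec_dot, Matrix.mulVec_mulVec, hU, Matrix.one_mulVec]
      have hWR : W * (1 - V * Vᵀ) = W := by
        rw [Matrix.mul_sub, Matrix.mul_one, ← Matrix.mul_assoc, hWV, Matrix.zero_mul, sub_zero]
      have hterm2 : (W *ᵥ x) ⬝ᵥ (W *ᵥ x) ≤
          ((1 - V * Vᵀ) *ᵥ x) ⬝ᵥ ((1 - V * Vᵀ) *ᵥ x) := by
        have : W *ᵥ x = W *ᵥ ((1 - V * Vᵀ) *ᵥ x) := by
          rw [Matrix.mulVec_mulVec, hWR]
        rw [this]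
        exact hWball _
      have hterm3 : ((1 - V * Vᵀ) *ᵥ x) ⬝ᵥ ((1 - V * Vᵀ) *ᵥ x) =
          x ⬝ᵥ x - (Vᵀ *ᵥ x) ⬝ᵥ (Vᵀ *ᵥ x) := by
        rw [mulVec_dot, hRsym, Matrix.mulVec_mulVec, hRidem]
        rw [Matrix.sub_mulVec, Matrix.one_mulVec, dotProduct_sub]
        have : x ⬝ᵥ ((V * Vᵀ) *ᵥ x) = (Vᵀ *ᵥ x) ⬝ᵥ (Vᵀ *ᵥ x) := by
          rw [← Matrix.mulVec_mulVec, ← mulVec_dot V (Vᵀ *ᵥ x) x, dotProduct_comm]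
        rw [this]
      have hsym : (W *ᵥ x) ⬝ᵥ (U *ᵥ (Vᵀ *ᵥ x)) = 0 := by
        rw [dotProduct_comm]; exact hcross
      rw [hNx, add_dotProduct, dotProduct_add, dotProduct_add, hcross, hsym, hterm1]
      linarith
    -- trace of Nᵀ M
    have htrNM : (Nᵀ * M).trace = Q.trace := by
      have hNT : Nᵀ = V * Uᵀ + Wᵀ := by
        rw [hNdec, transpose_add, transpose_mul, transpose_transpose]
      have hWTU : Wᵀ * U = 0 := by
        have := congrArg Matrix.transpose hUTW
        rwa [transpose_mul, transpose_transpose, transpose_zero] at this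
      rw [hNT, hSVD, Matrix.add_mul, trace_add]
      have e1 : V * Uᵀ * (U * Q * Vᵀ) = V * Q * Vᵀ := by
        calc V * Uᵀ * (U * Q * Vᵀ) = V * ((Uᵀ * U) * (Q * Vᵀ)) := by
              simp only [Matrix.mul_assoc]
        _ = V * (Q * Vᵀ) := by rw [hU, Matrix.one_mul]
        _ = V * Q * Vᵀ := by rw [Matrix.mul_assoc]
      have e2 : Wᵀ * (U * Q * Vᵀ) = 0 := by
        calc Wᵀ * (U * Q * Vᵀ) = (Wᵀ * U) * (Q * Vᵀ) := by simp only [Matrix.mul_assoc]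
        _ = 0 := by rw [hWTU, Matrix.zero_mul]
      rw [e1, e2, trace_zero, add_zero, trace_mul_cycle, hV, Matrix.one_mul]
    have := trace_le_nuclearNorm N X hball
    rw [Matrix.mul_sub, trace_sub, hnnM, htrNM]
    linarith
end
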